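/- Weak normalization of the simply typed λ-calculus with products and sums: every well-typed term reduces in finitely many steps—using β-reduction for functions, projection reductions for pairs, case reductions for injections, and permutation of case eliminations—to a normal form (a term admitting none of these reductions). -/

import Mathlib

/-- Simple types: base, function, product and sum types. -/
inductive Ty : Type
  | base : Ty
  | arrow : Ty → Ty → Ty
  | prod : Ty → Ty → Ty
  | sum : Ty → Ty → Ty

/-- Terms of the simply typed λ-calculus with products and sums (de Bruijn indices;
`inl B t` and `inr A t` carry the other summand as annotation). -/
inductive Tm : Type
  | var : ℕ → Tm
  | lam : Ty → Tm → Tm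
  | app : Tm → Tm → Tm
  | pair : Tm → Tm → Tm
  | proj : Bool → Tm → Tm
  | inl : Ty → Tm → Tm
  | inr : Ty → Tm → Tm
  | case : Tm → Tm → Tm → Tm

/-- Shift free de Bruijn variables `≥ c` up by one. -/
def shift (c : ℕ) : Tm → Tm
  | .var n => if n < c then .var n else .var (n + 1)
  | .lam A t => .lam A (shift (c + 1) t)
  | .app t u => .app (shift c t) (shift c u)
  | .pair t u => .pair (shift c t) (shift c u)
  | .proj b t => .proj b (shift c t)
  | .inl B t => .inl B (shift c t)
  | .inr A t => .inr A (shift c t)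
  | .case t u v => .case (shift c t) (shift (c + 1) u) (shift (c + 1) v)

/-- Capture-avoiding substitution of `s` for the variable `k`. -/
def subst (k : ℕ) (s : Tm) : Tm → Tm
  | .var n => if n < k then .var n else if n = k then s else .var (n - 1)
  | .lam A t => .lam A (subst (k + 1) (shift 0 s) t)
  | .app t u => .app (subst k s t) (subst k s u)
  | .pair t u => .pair (subst k s t) (subst k s u)
  | .proj b t => .proj b (subst k s t)
  | .inl B t => .inl B (subst k s t)
  | .inr A t => .inr A (subst k s t)
  | .case t u v => .case (subst k s t) (subst (k + 1) (shift 0 s) u) (subst (k + 1) (shift 0 s) v)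

/-- Standard typing judgment `Γ ⊢ t : A`. -/
inductive HasTy : List Ty → Tm → Ty → Prop
  | var {Γ n A} : Γ[n]? = some A → HasTy Γ (.var n) A
  | lam {Γ A B t} : HasTy (A :: Γ) t B → HasTy Γ (.lam A t) (Ty.arrow A B)
  | app {Γ A B t u} : HasTy Γ t (Ty.arrow A B) → HasTy Γ u A → HasTy Γ (.app t u) B
  | pair {Γ A B t u} : HasTy Γ t A → HasTy Γ u B → HasTy Γ (.pair t u) (Ty.prod A B)
  | projL {Γ A B t} : HasTy Γ t (Ty.prod A B) → HasTy Γ (.proj false t) A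
  | projR {Γ A B t} : HasTy Γ t (Ty.prod A B) → HasTy Γ (.proj true t) B
  | inl {Γ A B t} : HasTy Γ t A → HasTy Γ (.inl B t) (Ty.sum A B)
  | inr {Γ A B t} : HasTy Γ t B → HasTy Γ (.inr A t) (Ty.sum A B)
  | case {Γ A B C t u v} : HasTy Γ t (Ty.sum A B) → HasTy (A :: Γ) u C →
      HasTy (B :: Γ) v C → HasTy Γ (.case t u v) C


/-- One-step reduction: β-reduction, projection reductions, case reductions and
permutations of case eliminations (pushing a single elimination — an applied
argument, a projection, or another case — into both branches of a case),
applied at any position in a term. -/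
inductive Step : Tm → Tm → Prop
  | beta {A t u} : Step (.app (.lam A t) u) (subst 0 u t)
  | projPairL {u v} : Step (.proj false (.pair u v)) u
  | projPairR {u v} : Step (.proj true (.pair u v)) v
  | caseInl {B t u v} : Step (.case (.inl B t) u v) (subst 0 t u)
  | caseInr {A t u v} : Step (.case (.inr A t) u v) (subst 0 t v)
  | permApp {t u v w} :
      Step (.app (.case t u v) w) (.case t (.app u (shift 0 w)) (.app v (shift 0 w)))
  | permProj {b t u v} :
      Step (.proj b (.case t u v)) (.case t (.proj b u) (.proj b v))
  | permCase {t u v a b} :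
      Step (.case (.case t u v) a b)
        (.case t (.case u (shift 1 a) (shift 1 b)) (.case v (shift 1 a) (shift 1 b)))
  | congLam {A t t'} : Step t t' → Step (.lam A t) (.lam A t')
  | congAppL {t t' u} : Step t t' → Step (.app t u) (.app t' u)
  | congAppR {t u u'} : Step u u' → Step (.app t u) (.app t u')
  | congPairL {t t' u} : Step t t' → Step (.pair t u) (.pair t' u)
  | congPairR {t u u'} : Step u u' → Step (.pair t u) (.pair t u')
  | congProj {b t t'} : Step t t' → Step (.proj b t) (.proj b t')
  | congInl {B t t'} : Step t t' → Step (.inl B t) (.inl B t')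
  | congInr {A t t'} : Step t t' → Step (.inr A t) (.inr A t')
  | congCase₀ {t t' u v} : Step t t' → Step (.case t u v) (.case t' u v)
  | congCase₁ {t u u' v} : Step u u' → Step (.case t u v) (.case t u' v)
  | congCase₂ {t u v v'} : Step v v' → Step (.case t u v) (.case t u v')

/-- A normal form admits none of the reductions. -/
def NormalForm (t : Tm) : Prop := ∀ u, ¬ Step t u

/-!
Tait's reducibility method. At base, function and product types a term is reducible when it is
weakly normalizing and its eliminations by reducible arguments are reducible; at `A + B` when it
reduces to a tree of cases on neutral terms whose leaves are neutral or injections of reducible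
terms. The permutation reductions push every elimination of a case on a neutral term into its
branches, so such a case with reducible branches is reducible at every type; this is what makes
the case rule, and case trees as scrutinees, go through. Reducibility is closed under head
expansion, contains the neutral terms and implies weak normalization, so the fundamental lemma
applied to the identity substitution gives the theorem.
-/

namespace Tm

def upRen (ρ : ℕ → ℕ) : ℕ → ℕ
  | 0 => 0
  | n + 1 => ρ n + 1

def rename (ρ : ℕ → ℕ) : Tm → Tm
  | var n => var (ρ n)
  | lam A t => lam A (rename (upRen ρ) t)
  | app t u => app (rename ρ t) (rename ρ u)
  | pair t u => pair (rename ρ t) (rename ρ u)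
  | proj b t => proj b (rename ρ t)
  | inl B t => inl B (rename ρ t)
  | inr A t => inr A (rename ρ t)
  | case t u v => case (rename ρ t) (rename (upRen ρ) u) (rename (upRen ρ) v)

def upSubst (σ : ℕ → Tm) : ℕ → Tm
  | 0 => var 0
  | n + 1 => rename Nat.succ (σ n)

def psubst (σ : ℕ → Tm) : Tm → Tm
  | var n => σ n
  | lam A t => lam A (psubst (upSubst σ) t)
  | app t u => app (psubst σ t) (psubst σ u)
  | pair t u => pair (psubst σ t) (psubst σ u)
  | proj b t => proj b (psubst σ t)
  | inl B t => inl B (psubst σ t)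
  | inr A t => inr A (psubst σ t)
  | case t u v => case (psubst σ t) (psubst (upSubst σ) u) (psubst (upSubst σ) v)

def scons (a : Tm) (σ : ℕ → Tm) : ℕ → Tm
  | 0 => a
  | n + 1 => σ n

theorem upRen_id : upRen id = id := by
  funext n; cases n <;> rfl

theorem upRen_comp (ρ ρ' : ℕ → ℕ) : upRen ρ ∘ upRen ρ' = upRen (ρ ∘ ρ') := by
  funext n; cases n <;> rfl

theorem rename_id (t : Tm) : t.rename id = t := by
  induction t <;> simp_all [rename, upRen_id]

theorem rename_rename (ρ ρ' : ℕ → ℕ) (t : Tm) :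
    (t.rename ρ').rename ρ = t.rename (ρ ∘ ρ') := by
  induction t generalizing ρ ρ' <;> simp_all [rename, upRen_comp]

theorem upSubst_comp_upRen (σ : ℕ → Tm) (ρ : ℕ → ℕ) :
    upSubst σ ∘ upRen ρ = upSubst (σ ∘ ρ) := by
  funext n; cases n <;> rfl

theorem psubst_rename (σ : ℕ → Tm) (ρ : ℕ → ℕ) (t : Tm) :
    (t.rename ρ).psubst σ = t.psubst (σ ∘ ρ) := by
  induction t generalizing σ ρ <;> simp_all [rename, psubst, upSubst_comp_upRen]

theorem rename_comp_upSubst (ρ : ℕ → ℕ) (σ : ℕ → Tm) :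
    rename (upRen ρ) ∘ upSubst σ = upSubst (rename ρ ∘ σ) := by
  funext n; cases n
  · rfl
  · simp only [Function.comp_apply, upSubst, rename_rename]; rfl

theorem rename_psubst (ρ : ℕ → ℕ) (σ : ℕ → Tm) (t : Tm) :
    (t.psubst σ).rename ρ = t.psubst (rename ρ ∘ σ) := by
  induction t generalizing σ ρ <;> simp_all [rename, psubst, rename_comp_upSubst]

theorem psubst_comp_upSubst (σ τ : ℕ → Tm) :
    psubst (upSubst σ) ∘ upSubst τ = upSubst (psubst σ ∘ τ) := by
  funext n; cases n
  · rfl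
  · simp only [Function.comp_apply, upSubst, psubst_rename, rename_psubst]; rfl

theorem psubst_psubst (σ τ : ℕ → Tm) (t : Tm) :
    (t.psubst τ).psubst σ = t.psubst (psubst σ ∘ τ) := by
  induction t generalizing σ τ <;> simp_all [psubst, psubst_comp_upSubst]

theorem upSubst_var : upSubst var = var := by
  funext n; cases n <;> rfl

theorem psubst_var (t : Tm) : t.psubst var = t := by
  induction t <;> simp_all [psubst, upSubst_var]

def shiftRen (c n : ℕ) : ℕ := if n < c then n else n + 1

theorem upRen_shiftRen (c : ℕ) : upRen (shiftRen c) = shiftRen (c + 1) := by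
  funext n; cases n <;> simp [upRen, shiftRen, apply_ite (· + 1)]

theorem shift_eq_rename (c : ℕ) (t : Tm) : shift c t = t.rename (shiftRen c) := by
  induction t generalizing c with
  | var n => simp only [shift, rename, shiftRen]; split <;> rfl
  | _ => simp_all [shift, rename, upRen_shiftRen]

theorem shift_zero (t : Tm) : shift 0 t = t.rename Nat.succ := by
  rw [shift_eq_rename]; rfl

theorem shift_one (t : Tm) : shift 1 t = t.rename (upRen Nat.succ) := by
  rw [shift_eq_rename]; congr 1; funext n; cases n <;> rfl

def substMap (k : ℕ) (s : Tm) (n : ℕ) : Tm :=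
  if n < k then var n else if n = k then s else var (n - 1)

theorem upSubst_substMap (k : ℕ) (s : Tm) :
    upSubst (substMap k s) = substMap (k + 1) (shift 0 s) := by
  funext n; cases n with
  | zero => simp [substMap, upSubst]
  | succ n =>
    simp only [substMap, upSubst, shift_zero]
    split_ifs <;> simp_all [rename] <;> omega

theorem subst_eq_psubst (k : ℕ) (s t : Tm) : subst k s t = t.psubst (substMap k s) := by
  induction t generalizing k s with
  | var n => rfl
  | _ => simp_all [subst, psubst, upSubst_substMap]

theorem subst_zero (s t : Tm) : subst 0 s t = t.psubst (scons s var) := by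
  rw [subst_eq_psubst]; congr 1; funext n; cases n <;> simp [substMap, scons]

theorem rename_subst_zero (ρ : ℕ → ℕ) (s t : Tm) :
    (subst 0 s t).rename ρ = subst 0 (s.rename ρ) (t.rename (upRen ρ)) := by
  rw [subst_zero, subst_zero, rename_psubst, psubst_rename]
  congr 1; funext n; cases n <;> rfl

theorem rename_shift_zero (ρ : ℕ → ℕ) (t : Tm) :
    (shift 0 t).rename (upRen ρ) = shift 0 (t.rename ρ) := by
  rw [shift_zero, shift_zero, rename_rename, rename_rename]; rfl

theorem rename_shift_one (ρ : ℕ → ℕ) (t : Tm) :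
    (shift 1 t).rename (upRen (upRen ρ)) = shift 1 (t.rename (upRen ρ)) := by
  rw [shift_one, shift_one, rename_rename, rename_rename]
  congr 1; funext n; cases n <;> rfl

theorem subst_zero_var_zero (t : Tm) : subst 0 (var 0) (t.rename (upRen Nat.succ)) = t := by
  rw [subst_zero, psubst_rename]
  convert psubst_var t using 2
  funext n; cases n <;> rfl

theorem subst_zero_rename_psubst_upSubst (a : Tm) (ρ : ℕ → ℕ) (σ : ℕ → Tm) (t : Tm) :
    subst 0 a ((t.psubst (upSubst σ)).rename (upRen ρ)) = t.psubst (scons a (rename ρ ∘ σ)) := by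
  rw [subst_zero, rename_psubst, psubst_psubst]
  congr 1; funext n; cases n with
  | zero => rfl
  | succ n =>
    change (((σ n).rename Nat.succ).rename (upRen ρ)).psubst (scons a var) = (σ n).rename ρ
    rw [rename_rename, psubst_rename, ← psubst_var ((σ n).rename ρ), psubst_rename]
    rfl

end Tm

namespace Tm

mutual

/- `case` is not a neutral elimination: eliminating a case is a permutation redex. -/
inductive Neutral : Tm → Prop
  | var (n : ℕ) : Neutral (.var n)
  | app {t u} : Neutral t → Normal u → Neutral (.app t u)
  | proj {b t} : Neutral t → Neutral (.proj b t)

inductive Normal : Tm → Prop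
  | neutral {t} : Neutral t → Normal t
  | lam {A t} : Normal t → Normal (.lam A t)
  | pair {t u} : Normal t → Normal u → Normal (.pair t u)
  | inl {B t} : Normal t → Normal (.inl B t)
  | inr {A t} : Normal t → Normal (.inr A t)
  | case {t u v} : Neutral t → Normal u → Normal v → Normal (.case t u v)

end

mutual

theorem Neutral.normalForm {t : Tm} : Neutral t → NormalForm t
  | .var _, _, h => nomatch h
  | .app ht _, _, .congAppL h => ht.normalForm _ h
  | .app _ hu, _, .congAppR h => hu.normalForm _ h
  | .proj ht, _, .congProj h => ht.normalForm _ h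

theorem Normal.normalForm {t : Tm} : Normal t → NormalForm t
  | .neutral ht, _, h => ht.normalForm _ h
  | .lam ht, _, .congLam h => ht.normalForm _ h
  | .pair ht _, _, .congPairL h => ht.normalForm _ h
  | .pair _ hu, _, .congPairR h => hu.normalForm _ h
  | .inl ht, _, .congInl h => ht.normalForm _ h
  | .inr ht, _, .congInr h => ht.normalForm _ h
  | .case ht _ _, _, .congCase₀ h => ht.normalForm _ h
  | .case _ hu _, _, .congCase₁ h => hu.normalForm _ h
  | .case _ _ hv, _, .congCase₂ h => hv.normalForm _ h

end

mutual

theorem Neutral.rename {t : Tm} (ρ : ℕ → ℕ) : Neutral t → Neutral (t.rename ρ)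
  | .var n => .var (ρ n)
  | .app ht hu => .app (ht.rename ρ) (hu.rename ρ)
  | .proj ht => .proj (ht.rename ρ)

theorem Normal.rename {t : Tm} (ρ : ℕ → ℕ) : Normal t → Normal (t.rename ρ)
  | .neutral ht => .neutral (ht.rename ρ)
  | .lam ht => .lam (ht.rename _)
  | .pair ht hu => .pair (ht.rename ρ) (hu.rename ρ)
  | .inl ht => .inl (ht.rename ρ)
  | .inr ht => .inr (ht.rename ρ)
  | .case ht hu hv => .case (ht.rename ρ) (hu.rename _) (hv.rename _)

end

end Tm

infix:50 " ⟶* " => Relation.ReflTransGen Step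

namespace Tm

theorem _root_.Step.rename {t u : Tm} (h : Step t u) (ρ : ℕ → ℕ) :
    Step (t.rename ρ) (u.rename ρ) := by
  induction h generalizing ρ with
  | beta | caseInl | caseInr => rw [rename_subst_zero]; constructor
  | permApp => simp only [Tm.rename, rename_shift_zero]; exact .permApp
  | permCase => simp only [Tm.rename, rename_shift_one]; exact .permCase
  | projPairL | projPairR | permProj => constructor
  | congLam _ ih | congAppL _ ih | congAppR _ ih | congPairL _ ih | congPairR _ ih
    | congProj _ ih | congInl _ ih | congInr _ ih | congCase₀ _ ih | congCase₁ _ ih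
    | congCase₂ _ ih => constructor; exact ih _

theorem steps_rename {t u : Tm} (h : t ⟶* u) (ρ : ℕ → ℕ) : t.rename ρ ⟶* u.rename ρ :=
  h.lift _ fun _ _ h => h.rename ρ

theorem steps_lam {A : Ty} {t t' : Tm} (h : t ⟶* t') : lam A t ⟶* lam A t' :=
  h.lift _ fun _ _ => .congLam

theorem steps_app_right {t u u' : Tm} (h : u ⟶* u') : app t u ⟶* app t u' :=
  h.lift _ fun _ _ => .congAppR

theorem steps_pair {t t' u u' : Tm} (ht : t ⟶* t') (hu : u ⟶* u') :
    pair t u ⟶* pair t' u' :=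
  (ht.lift (pair · u) fun _ _ => .congPairL).trans (hu.lift _ fun _ _ => .congPairR)

theorem steps_inl {B : Ty} {t t' : Tm} (h : t ⟶* t') : inl B t ⟶* inl B t' :=
  h.lift _ fun _ _ => .congInl

theorem steps_inr {A : Ty} {t t' : Tm} (h : t ⟶* t') : inr A t ⟶* inr A t' :=
  h.lift _ fun _ _ => .congInr

theorem steps_case_scrutinee {t t' u v : Tm} (h : t ⟶* t') : case t u v ⟶* case t' u v :=
  h.lift (case · u v) fun _ _ => .congCase₀

theorem steps_case_branches {t u u' v v' : Tm} (hu : u ⟶* u') (hv : v ⟶* v') :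
    case t u v ⟶* case t u' v' :=
  (hu.lift (case t · v) fun _ _ => .congCase₁).trans (hv.lift _ fun _ _ => .congCase₂)

def WeaklyNormalizing (t : Tm) : Prop := ∃ u, t ⟶* u ∧ Normal u

theorem WeaklyNormalizing.rename {t : Tm} (h : WeaklyNormalizing t) (ρ : ℕ → ℕ) :
    WeaklyNormalizing (t.rename ρ) :=
  let ⟨u, htu, hu⟩ := h
  ⟨u.rename ρ, steps_rename htu ρ, hu.rename ρ⟩

theorem WeaklyNormalizing.of_steps {t t' : Tm} (h : t ⟶* t') (h' : WeaklyNormalizing t') :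
    WeaklyNormalizing t :=
  let ⟨u, htu, hu⟩ := h'
  ⟨u, h.trans htu, hu⟩

theorem weaklyNormalizing_case_branches {n u v : Tm} (hn : Neutral n)
    (hu : WeaklyNormalizing u) (hv : WeaklyNormalizing v) : WeaklyNormalizing (case n u v) :=
  let ⟨u', hu, hu'⟩ := hu
  let ⟨v', hv, hv'⟩ := hv
  ⟨case n u' v', steps_case_branches hu hv, .case hn hu' hv'⟩

end Tm

namespace Tm

inductive CaseTree (P Q : Tm → Prop) : Tm → Prop
  | inl {B a} : P a → CaseTree P Q (inl B a)
  | inr {A b} : Q b → CaseTree P Q (inr A b)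
  | neutral {n} : Neutral n → CaseTree P Q n
  | case {n u v} : Neutral n → CaseTree P Q u → CaseTree P Q v → CaseTree P Q (case n u v)

/- The function clause quantifies over renamings because the permutation `permApp` moves an
argument under the binder of a case branch. -/
def Reducible : Ty → Tm → Prop
  | .base, t => WeaklyNormalizing t
  | .arrow A B, t => WeaklyNormalizing t ∧
      ∀ (ρ : ℕ → ℕ) u, Reducible A u → Reducible B (app (t.rename ρ) u)
  | .prod A B, t => WeaklyNormalizing t ∧ Reducible A (proj false t) ∧ Reducible B (proj true t)
  | .sum A B, t => ∃ t', t ⟶* t' ∧ CaseTree (Reducible A) (Reducible B) t'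

theorem CaseTree.rename {P Q : Tm → Prop} (hP : ∀ ρ a, P a → P (a.rename ρ))
    (hQ : ∀ ρ b, Q b → Q (b.rename ρ)) {t : Tm} (h : CaseTree P Q t) (ρ : ℕ → ℕ) :
    CaseTree P Q (t.rename ρ) := by
  induction h generalizing ρ with
  | inl ha => exact .inl (hP ρ _ ha)
  | inr hb => exact .inr (hQ ρ _ hb)
  | neutral hn => exact .neutral (hn.rename ρ)
  | case hn _ _ ihu ihv => exact .case (hn.rename ρ) (ihu _) (ihv _)

theorem CaseTree.weaklyNormalizing {P Q : Tm → Prop} (hP : ∀ a, P a → WeaklyNormalizing a)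
    (hQ : ∀ b, Q b → WeaklyNormalizing b) {t : Tm} (h : CaseTree P Q t) :
    WeaklyNormalizing t := by
  induction h with
  | inl ha =>
    obtain ⟨a', ha, ha'⟩ := hP _ ha
    exact ⟨_, steps_inl ha, .inl ha'⟩
  | inr hb =>
    obtain ⟨b', hb, hb'⟩ := hQ _ hb
    exact ⟨_, steps_inr hb, .inr hb'⟩
  | neutral hn => exact ⟨_, .refl, .neutral hn⟩
  | case hn _ _ ihu ihv => exact weaklyNormalizing_case_branches hn ihu ihv

theorem Reducible.rename {A : Ty} {t : Tm} (h : Reducible A t) (ρ : ℕ → ℕ) :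
    Reducible A (t.rename ρ) := by
  induction A generalizing t ρ with
  | base => exact WeaklyNormalizing.rename h ρ
  | arrow A B =>
    refine ⟨h.1.rename ρ, fun ρ' u hu => ?_⟩
    rw [rename_rename]
    exact h.2 _ u hu
  | prod A B ihA ihB => exact ⟨h.1.rename ρ, ihA h.2.1 ρ, ihB h.2.2 ρ⟩
  | sum A B ihA ihB =>
    obtain ⟨t', htt', ht'⟩ := h
    exact ⟨_, steps_rename htt' ρ, ht'.rename (fun ρ _ ha => ihA ha ρ) (fun ρ _ hb => ihB hb ρ) ρ⟩

theorem Reducible.of_step {A : Ty} {t t' : Tm} (hs : Step t t') (h : Reducible A t') :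
    Reducible A t := by
  induction A generalizing t t' with
  | base => exact WeaklyNormalizing.of_steps (.single hs) h
  | arrow A B _ ihB =>
    exact ⟨h.1.of_steps (.single hs), fun ρ u hu => ihB (.congAppL (hs.rename ρ)) (h.2 ρ u hu)⟩
  | prod A B ihA ihB =>
    exact ⟨h.1.of_steps (.single hs), ihA (.congProj hs) h.2.1, ihB (.congProj hs) h.2.2⟩
  | sum A B =>
    obtain ⟨t'', htt'', ht''⟩ := h
    exact ⟨t'', .head hs htt'', ht''⟩

theorem Reducible.of_steps {A : Ty} {t t' : Tm} (hs : t ⟶* t') (h : Reducible A t') :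
    Reducible A t := by
  induction hs using Relation.ReflTransGen.head_induction_on with
  | refl => exact h
  | head hs _ ih => exact ih.of_step hs

theorem Reducible.weaklyNormalizing {A : Ty} {t : Tm} (h : Reducible A t) :
    WeaklyNormalizing t := by
  induction A generalizing t with
  | base => exact h
  | arrow | prod => exact h.1
  | sum A B ihA ihB =>
    obtain ⟨t', htt', ht'⟩ := h
    exact (ht'.weaklyNormalizing (fun _ => ihA) (fun _ => ihB)).of_steps htt'

theorem Neutral.reducible {A : Ty} {n : Tm} (hn : Neutral n) : Reducible A n := by
  induction A generalizing n with
  | base => exact ⟨n, .refl, .neutral hn⟩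
  | arrow A B _ ihB =>
    refine ⟨⟨n, .refl, .neutral hn⟩, fun ρ u hu => ?_⟩
    obtain ⟨u', huu', hu'⟩ := hu.weaklyNormalizing
    exact (ihB (.app (hn.rename ρ) hu')).of_steps (steps_app_right huu')
  | prod A B ihA ihB => exact ⟨⟨n, .refl, .neutral hn⟩, ihA (.proj hn), ihB (.proj hn)⟩
  | sum => exact ⟨n, .refl, .neutral hn⟩

theorem reducible_case_of_neutral {C : Ty} {n u v : Tm} (hn : Neutral n) (hu : Reducible C u)
    (hv : Reducible C v) : Reducible C (case n u v) := by
  induction C generalizing n u v with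
  | base => exact weaklyNormalizing_case_branches hn hu hv
  | arrow D E _ ihE =>
    refine ⟨weaklyNormalizing_case_branches hn hu.weaklyNormalizing hv.weaklyNormalizing,
      fun ρ w hw => .of_step .permApp ?_⟩
    have hw' : Reducible D (shift 0 w) := by rw [shift_zero]; exact hw.rename _
    exact ihE (hn.rename ρ) (hu.2 _ _ hw') (hv.2 _ _ hw')
  | prod D E ihD ihE =>
    exact ⟨weaklyNormalizing_case_branches hn hu.weaklyNormalizing hv.weaklyNormalizing,
      .of_step .permProj (ihD hn hu.2.1 hv.2.1), .of_step .permProj (ihE hn hu.2.2 hv.2.2)⟩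
  | sum =>
    obtain ⟨u', huu', hu'⟩ := hu
    obtain ⟨v', hvv', hv'⟩ := hv
    exact ⟨case n u' v', steps_case_branches huu' hvv', .case hn hu' hv'⟩

def ReducibleBranch (P : Tm → Prop) (C : Ty) (U : Tm) : Prop :=
  ∀ (ρ : ℕ → ℕ) a, P a → Reducible C (subst 0 a (U.rename (upRen ρ)))

theorem ReducibleBranch.rename {P : Tm → Prop} {C : Ty} {U : Tm} (h : ReducibleBranch P C U)
    (ρ : ℕ → ℕ) : ReducibleBranch P C (U.rename (upRen ρ)) := by
  intro ρ' a ha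
  rw [rename_rename, upRen_comp]
  exact h _ a ha

theorem ReducibleBranch.reducible {A C : Ty} {U : Tm} (h : ReducibleBranch (Reducible A) C U) :
    Reducible C U := by
  simpa only [subst_zero_var_zero] using h Nat.succ (var 0) (Neutral.var 0).reducible

theorem CaseTree.reducible_case {A B C : Ty} {t U V : Tm}
    (ht : CaseTree (Reducible A) (Reducible B) t) (hU : ReducibleBranch (Reducible A) C U)
    (hV : ReducibleBranch (Reducible B) C V) : Reducible C (.case t U V) := by
  induction ht generalizing U V with
  | inl ha => simpa only [upRen_id, rename_id] using (hU id _ ha).of_step .caseInl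
  | inr hb => simpa only [upRen_id, rename_id] using (hV id _ hb).of_step .caseInr
  | neutral hn => exact reducible_case_of_neutral hn hU.reducible hV.reducible
  | case hn _ _ ihu ihv =>
    have hU' : ReducibleBranch (Reducible A) C (shift 1 U) := by
      rw [shift_one]; exact hU.rename _
    have hV' : ReducibleBranch (Reducible B) C (shift 1 V) := by
      rw [shift_one]; exact hV.rename _
    exact .of_step .permCase (reducible_case_of_neutral hn (ihu hU' hV') (ihv hU' hV'))

theorem Reducible.case {A B C : Ty} {t U V : Tm} (ht : Reducible (.sum A B) t)
    (hU : ReducibleBranch (Reducible A) C U) (hV : ReducibleBranch (Reducible B) C V) :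
    Reducible C (.case t U V) :=
  let ⟨_, htt', ht'⟩ := ht
  (ht'.reducible_case hU hV).of_steps (steps_case_scrutinee htt')

end Tm

namespace Tm

def ReducibleSubst (Γ : List Ty) (σ : ℕ → Tm) : Prop :=
  ∀ n A, Γ[n]? = some A → Reducible A (σ n)

theorem reducibleSubst_var (Γ : List Ty) : ReducibleSubst Γ var :=
  fun n _ _ => (Neutral.var n).reducible

theorem ReducibleSubst.scons {Γ : List Ty} {σ : ℕ → Tm} {A : Ty} {a : Tm} (hσ : ReducibleSubst Γ σ)
    (ha : Reducible A a) : ReducibleSubst (A :: Γ) (scons a σ) := by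
  rintro (_ | n) B hB
  · cases hB; exact ha
  · exact hσ n B hB

theorem ReducibleSubst.rename {Γ : List Ty} {σ : ℕ → Tm} (hσ : ReducibleSubst Γ σ)
    (ρ : ℕ → ℕ) : ReducibleSubst Γ (rename ρ ∘ σ) :=
  fun n B hB => (hσ n B hB).rename ρ

theorem ReducibleSubst.upSubst {Γ : List Ty} {σ : ℕ → Tm} {A : Ty} (hσ : ReducibleSubst Γ σ) :
    ReducibleSubst (A :: Γ) (upSubst σ) := by
  rintro (_ | n) B hB
  · exact (Neutral.var 0).reducible
  · exact (hσ n B hB).rename Nat.succ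

theorem ReducibleSubst.reducibleBranch {Γ : List Ty} {σ : ℕ → Tm} {A C : Ty} {u : Tm}
    (hσ : ReducibleSubst Γ σ)
    (hu : ∀ τ, ReducibleSubst (A :: Γ) τ → Reducible C (u.psubst τ)) :
    ReducibleBranch (Reducible A) C (u.psubst (Tm.upSubst σ)) := by
  intro ρ a ha
  rw [subst_zero_rename_psubst_upSubst]
  exact hu _ ((hσ.rename ρ).scons ha)

theorem _root_.HasTy.reducible_psubst {Γ : List Ty} {t : Tm} {A : Ty} (h : HasTy Γ t A)
    {σ : ℕ → Tm} (hσ : ReducibleSubst Γ σ) : Reducible A (t.psubst σ) := by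
  induction h generalizing σ with
  | var hn => exact hσ _ _ hn
  | lam _ ih =>
    have hbody := ih hσ.upSubst
    refine ⟨?_, fun ρ u hu => .of_step .beta ?_⟩
    · obtain ⟨b, hb, hb'⟩ := hbody.weaklyNormalizing
      exact ⟨_, steps_lam hb, .lam hb'⟩
    · exact hσ.reducibleBranch (fun _ => ih) ρ u hu
  | app _ _ iht ihu => simpa only [psubst, rename_id] using (iht hσ).2 id _ (ihu hσ)
  | pair _ _ iht ihu =>
    obtain ⟨t', htt', ht'⟩ := (iht hσ).weaklyNormalizing
    obtain ⟨u', huu', hu'⟩ := (ihu hσ).weaklyNormalizing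
    exact ⟨⟨_, steps_pair htt' huu', .pair ht' hu'⟩,
      .of_step .projPairL (iht hσ), .of_step .projPairR (ihu hσ)⟩
  | projL _ ih => exact (ih hσ).2.1
  | projR _ ih => exact (ih hσ).2.2
  | inl _ ih => exact ⟨_, .refl, .inl (ih hσ)⟩
  | inr _ ih => exact ⟨_, .refl, .inr (ih hσ)⟩
  | case _ _ _ iht ihu ihv =>
    exact (iht hσ).case (hσ.reducibleBranch fun _ => ihu) (hσ.reducibleBranch fun _ => ihv)

end Tm

/-- Weak normalization: every well-typed term reduces in finitely many steps to a
normal form. -/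
theorem weak_normalization {Γ : List Ty} {t : Tm} {A : Ty} (h : HasTy Γ t A) :
    ∃ u, Relation.ReflTransGen Step t u ∧ NormalForm u := by
  have ht := h.reducible_psubst (Tm.reducibleSubst_var Γ)
  rw [Tm.psubst_var] at ht
  obtain ⟨u, htu, hu⟩ := ht.weaklyNormalizing
  exact ⟨u, htu, hu.normalForm⟩
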